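/- arXiv:2302.13914 — 3 statements merged into one kernel-verified Lean document; each statement's English description precedes it below -/
import Mathlib

section
/- Let X, (X_{it}) be iid with E[X⁴] < ∞ and set T₁₂ = Σ_{t=1}^n X_{1t}X_{2t}. Then E[T₁₂⁴] = n(n−1)(n−2)(n−3)(E[X])⁸ + 6n(n−1)(n−2)(E[X²])²(E[X])⁴ + 3n(n−1)(E[X²])⁴ + 4n(n−1)(E[X³])²(E[X])² + n(E[X⁴])². -/
open MeasureTheory ProbabilityTheory Finset

/-! The products `Y t = X (0, t) * X (1, t)` are independent, with `E[Y t ^ k] = (E[X₀ ^ k])²`.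
If `S` is a sum of independent variables with common moments `m`, independent of one more such
variable `Y`, then expanding `(Y + S) ^ k` binomially and using independence termwise gives
`E[(Y + S) ^ k] = ∑ j, C(k, j) m j E[S ^ (k - j)]`; for `k ≤ 4` this recursion in the number
of summands solves in closed form by induction. -/

section Moments

variable {Ω : Type _} [MeasurableSpace Ω] {μ : Measure Ω}

lemma integrable_pow_of_le [IsFiniteMeasure μ] {X : Ω → ℝ} (hX : AEStronglyMeasurable X μ)
    {j k : ℕ} (hjk : j ≤ k) (h : Integrable (fun ω => X ω ^ k) μ) :
    Integrable (fun ω => X ω ^ j) μ := by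
  refine (integrable_norm_iff (hX.pow j)).1 ?_
  simpa only [norm_pow, Pi.pow_apply] using
    integrable_norm_pow_of_le hX hjk (by simpa only [norm_pow] using h.norm)

namespace ProbabilityTheory.IndepFun

variable {Y Z : Ω → ℝ}

lemma integrable_pow_mul_pow (h : IndepFun Y Z μ) {j k : ℕ}
    (hY : Integrable (fun ω => Y ω ^ j) μ) (hZ : Integrable (fun ω => Z ω ^ k) μ) :
    Integrable (fun ω => Y ω ^ j * Z ω ^ k) μ :=
  (h.comp (measurable_id.pow_const j) (measurable_id.pow_const k)).integrable_mul hY hZ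

lemma integral_pow_mul_pow (h : IndepFun Y Z μ) {j k : ℕ}
    (hY : Integrable (fun ω => Y ω ^ j) μ) (hZ : Integrable (fun ω => Z ω ^ k) μ) :
    ∫ ω, Y ω ^ j * Z ω ^ k ∂μ = (∫ ω, Y ω ^ j ∂μ) * ∫ ω, Z ω ^ k ∂μ :=
  (h.comp (measurable_id.pow_const j) (measurable_id.pow_const k)).integral_fun_mul_eq_mul_integral
    hY.aestronglyMeasurable hZ.aestronglyMeasurable

variable {K : ℕ}

lemma integrable_add_pow (h : IndepFun Y Z μ)
    (hY : ∀ j ≤ K, Integrable (fun ω => Y ω ^ j) μ)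
    (hZ : ∀ j ≤ K, Integrable (fun ω => Z ω ^ j) μ) :
    Integrable (fun ω => (Y ω + Z ω) ^ K) μ := by
  simp_rw [add_pow]
  refine integrable_finsetSum _ fun j hj => ?_
  have hjK : j ≤ K := Nat.lt_succ_iff.1 (mem_range.1 hj)
  exact (h.integrable_pow_mul_pow (hY j hjK) (hZ _ (Nat.sub_le K j))).mul_const _

lemma integral_add_pow (h : IndepFun Y Z μ)
    (hY : ∀ j ≤ K, Integrable (fun ω => Y ω ^ j) μ)
    (hZ : ∀ j ≤ K, Integrable (fun ω => Z ω ^ j) μ) :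
    ∫ ω, (Y ω + Z ω) ^ K ∂μ =
      ∑ j ∈ range (K + 1),
        (∫ ω, Y ω ^ j ∂μ) * (∫ ω, Z ω ^ (K - j) ∂μ) * K.choose j := by
  simp_rw [add_pow]
  have hterm : ∀ j ∈ range (K + 1),
      Integrable (fun ω => Y ω ^ j * Z ω ^ (K - j)) μ ∧
        ∫ ω, Y ω ^ j * Z ω ^ (K - j) ∂μ = (∫ ω, Y ω ^ j ∂μ) * ∫ ω, Z ω ^ (K - j) ∂μ := by
    intro j hj
    have hjK : j ≤ K := Nat.lt_succ_iff.1 (mem_range.1 hj)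
    exact ⟨h.integrable_pow_mul_pow (hY j hjK) (hZ _ (Nat.sub_le K j)),
      h.integral_pow_mul_pow (hY j hjK) (hZ _ (Nat.sub_le K j))⟩
  rw [integral_finsetSum _ fun j hj => (hterm j hj).1.mul_const _]
  exact sum_congr rfl fun j hj => by rw [integral_mul_const, (hterm j hj).2]

end ProbabilityTheory.IndepFun

/-- The `k`-th moment of a sum of `N` independent random variables whose `j`-th moments are
`m j`. -/
noncomputable def sumMoment (m : ℕ → ℝ) : ℕ → ℕ → ℝ
  | 0, k => 0 ^ k
  | N + 1, k => ∑ j ∈ range (k + 1), m j * sumMoment m N (k - j) * k.choose j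

section sumMoment

variable {m : ℕ → ℝ} (h₀ : m 0 = 1) {N : ℕ}
include h₀

lemma sumMoment_zero_right : sumMoment m N 0 = 1 := by
  induction N with
  | zero => simp [sumMoment]
  | succ N ih => simp [sumMoment, ih, h₀]

lemma sumMoment_one_right : sumMoment m N 1 = N * m 1 := by
  induction N with
  | zero => simp [sumMoment]
  | succ N ih =>
    simp only [sumMoment, sum_range_succ, sum_range_zero, Nat.choose, Nat.cast_add, Nat.cast_one,
      ih, h₀, sumMoment_zero_right h₀]
    ring

lemma sumMoment_two_right : sumMoment m N 2 = N * m 2 + N * (N - 1) * m 1 ^ 2 := by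
  induction N with
  | zero => simp [sumMoment]
  | succ N ih =>
    simp only [sumMoment, sum_range_succ, sum_range_zero, Nat.choose, Nat.cast_add, Nat.cast_one,
      ih, h₀, sumMoment_zero_right h₀, sumMoment_one_right h₀]
    ring

lemma sumMoment_three_right : sumMoment m N 3 =
    N * m 3 + 3 * N * (N - 1) * m 2 * m 1 + N * (N - 1) * (N - 2) * m 1 ^ 3 := by
  induction N with
  | zero => simp [sumMoment]
  | succ N ih =>
    simp only [sumMoment, sum_range_succ, sum_range_zero, Nat.choose, Nat.cast_add, Nat.cast_one,
      ih, h₀, sumMoment_zero_right h₀, sumMoment_one_right h₀, sumMoment_two_right h₀]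
    ring

lemma sumMoment_four_right : sumMoment m N 4 =
    N * m 4 + 4 * N * (N - 1) * m 3 * m 1 + 3 * N * (N - 1) * m 2 ^ 2
      + 6 * N * (N - 1) * (N - 2) * m 2 * m 1 ^ 2 + N * (N - 1) * (N - 2) * (N - 3) * m 1 ^ 4 := by
  induction N with
  | zero => simp [sumMoment]
  | succ N ih =>
    simp only [sumMoment, sum_range_succ, sum_range_zero, Nat.choose, Nat.cast_add, Nat.cast_one,
      ih, h₀, sumMoment_zero_right h₀, sumMoment_one_right h₀, sumMoment_two_right h₀,
      sumMoment_three_right h₀]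
    ring

end sumMoment

lemma integrable_and_integral_finsetSum_pow [IsProbabilityMeasure μ] {ι : Type*}
    {Y : ι → Ω → ℝ} {m : ℕ → ℝ} {d : ℕ}
    (hint : ∀ i, ∀ k ≤ d, Integrable (fun ω => Y i ω ^ k) μ)
    (hmom : ∀ i, ∀ k ≤ d, ∫ ω, Y i ω ^ k ∂μ = m k)
    (hindep : ∀ a s, a ∉ s → IndepFun (Y a) (fun ω => ∑ t ∈ s, Y t ω) μ)
    (s : Finset ι) :
    ∀ k ≤ d, Integrable (fun ω => (∑ t ∈ s, Y t ω) ^ k) μ ∧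
      ∫ ω, (∑ t ∈ s, Y t ω) ^ k ∂μ = sumMoment m #s k := by
  induction s using Finset.cons_induction with
  | empty => simp [sumMoment]
  | cons a s ha ih =>
    intro k hk
    have hS : ∀ j ≤ k, Integrable (fun ω => (∑ t ∈ s, Y t ω) ^ j) μ := fun j hj =>
      (ih j (hj.trans hk)).1
    have hYa : ∀ j ≤ k, Integrable (fun ω => Y a ω ^ j) μ := fun j hj =>
      hint a j (hj.trans hk)
    simp only [sum_cons, card_cons, sumMoment]
    refine ⟨(hindep a s ha).integrable_add_pow hYa hS, ?_⟩
    rw [(hindep a s ha).integral_add_pow hYa hS]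
    refine sum_congr rfl fun j hj => ?_
    have hjk : j ≤ k := Nat.lt_succ_iff.1 (mem_range.1 hj)
    rw [hmom a j (hjk.trans hk), (ih (k - j) ((Nat.sub_le k j).trans hk)).2]

lemma ProbabilityTheory.iIndepFun.indepFun_mul_finsetSum_mul {κ ι : Type*}
    {X : κ × ι → Ω → ℝ} (hX : iIndepFun X μ) (hmeas : ∀ p, AEMeasurable (X p) μ) (i j : κ) {a : ι} {s : Finset ι}
    (ha : a ∉ s) :
    IndepFun (fun ω => X (i, a) ω * X (j, a) ω)
      (fun ω => ∑ t ∈ s, X (i, t) ω * X (j, t) ω) μ := by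
  classical
  set B : Finset κ := {i, j}
  have hdisj : Disjoint (B ×ˢ {a}) (B ×ˢ s) :=
    disjoint_product.2 (Or.inr (disjoint_singleton_left.2 ha))
  have hφ : Measurable fun v : B ×ˢ {a} → ℝ =>
      v ⟨(i, a), by simp [B]⟩ * v ⟨(j, a), by simp [B]⟩ := by fun_prop
  have hψ : Measurable fun v : B ×ˢ s → ℝ =>
      ∑ t ∈ s.attach, v ⟨(i, t), by simp [B, t.2]⟩ * v ⟨(j, t), by simp [B, t.2]⟩ := by
    fun_prop
  have hblocks := (hX.indepFun_finset₀ _ _ hdisj hmeas).comp hφ hψ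
  convert hblocks using 1 <;> funext ω
  · rfl
  · exact (sum_attach s fun t => X (i, t) ω * X (j, t) ω).symm

theorem stmt_10_general {Ω : Type*} [MeasurableSpace Ω] (μ : Measure Ω) [IsProbabilityMeasure μ]
    (n : ℕ) (X : Fin 2 × Fin n → Ω → ℝ) (X₀ : Ω → ℝ)
    (hindep : iIndepFun X μ)
    (hid : ∀ i, IdentDistrib (X i) X₀ μ μ)
    (hInt4 : Integrable (fun ω => X₀ ω ^ 4) μ) :
    ∫ ω, (∑ t : Fin n, X (0, t) ω * X (1, t) ω) ^ 4 ∂μ =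
      (n : ℝ) * ((n : ℝ) - 1) * ((n : ℝ) - 2) * ((n : ℝ) - 3) * (∫ ω, X₀ ω ∂μ) ^ 8
        + 6 * (n : ℝ) * ((n : ℝ) - 1) * ((n : ℝ) - 2) * (∫ ω, X₀ ω ^ 2 ∂μ) ^ 2 * (∫ ω, X₀ ω ∂μ) ^ 4
        + 3 * (n : ℝ) * ((n : ℝ) - 1) * (∫ ω, X₀ ω ^ 2 ∂μ) ^ 4
        + 4 * (n : ℝ) * ((n : ℝ) - 1) * (∫ ω, X₀ ω ^ 3 ∂μ) ^ 2 * (∫ ω, X₀ ω ∂μ) ^ 2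
        + (n : ℝ) * (∫ ω, X₀ ω ^ 4 ∂μ) ^ 2 := by
  have hpow : ∀ i k, IdentDistrib (fun ω => X i ω ^ k) (fun ω => X₀ ω ^ k) μ μ :=
    fun i k => (hid i).comp (measurable_id.pow_const k)
  have hint : ∀ i, ∀ k ≤ 4, Integrable (fun ω => X i ω ^ k) μ := fun i k hk =>
    integrable_pow_of_le (hid i).aemeasurable_fst.aestronglyMeasurable hk
      ((hpow i 4).integrable_iff.2 hInt4)
  have hpair : ∀ t : Fin n, IndepFun (X (0, t)) (X (1, t)) μ := fun t =>
    hindep.indepFun (by simp)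
  set m : ℕ → ℝ := fun k => (∫ ω, X₀ ω ^ k ∂μ) ^ 2 with hm
  have hmom : ∀ t : Fin n, ∀ k ≤ 4, ∫ ω, (X (0, t) ω * X (1, t) ω) ^ k ∂μ = m k := by
    intro t k hk
    simp_rw [mul_pow]
    rw [(hpair t).integral_pow_mul_pow (hint _ k hk) (hint _ k hk), (hpow _ k).integral_eq,
      (hpow _ k).integral_eq, ← sq]
  have hmomint :
      ∀ t : Fin n, ∀ k ≤ 4, Integrable (fun ω => (X (0, t) ω * X (1, t) ω) ^ k) μ := by
    intro t k hk
    simp_rw [mul_pow]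
    exact (hpair t).integrable_pow_mul_pow (hint _ k hk) (hint _ k hk)
  have hsum := (integrable_and_integral_finsetSum_pow hmomint hmom
    (fun a s ha => hindep.indepFun_mul_finsetSum_mul (fun p => (hid p).aemeasurable_fst) 0 1 ha)
    univ 4 le_rfl).2
  rw [hsum, sumMoment_four_right (by simp [hm]), card_univ, Fintype.card_fin]
  simp only [hm, pow_one]
  ring

theorem stmt_10 {Ω : Type*} [MeasurableSpace Ω] (μ : Measure Ω) [IsProbabilityMeasure μ]
    (n : ℕ) (X : Fin 2 × Fin n → Ω → ℝ) (X₀ : Ω → ℝ)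
    (hmeas : ∀ i, Measurable (X i)) (hmeas₀ : Measurable X₀)
    (hindep : iIndepFun X μ)
    (hid : ∀ i, IdentDistrib (X i) X₀ μ μ)
    (hInt4 : Integrable (fun ω => X₀ ω ^ 4) μ) :
    ∫ ω, (∑ t : Fin n, X (0, t) ω * X (1, t) ω) ^ 4 ∂μ =
      (n : ℝ) * ((n : ℝ) - 1) * ((n : ℝ) - 2) * ((n : ℝ) - 3) * (∫ ω, X₀ ω ∂μ) ^ 8
        + 6 * (n : ℝ) * ((n : ℝ) - 1) * ((n : ℝ) - 2) * (∫ ω, X₀ ω ^ 2 ∂μ) ^ 2 * (∫ ω, X₀ ω ∂μ) ^ 4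
        + 3 * (n : ℝ) * ((n : ℝ) - 1) * (∫ ω, X₀ ω ^ 2 ∂μ) ^ 4
        + 4 * (n : ℝ) * ((n : ℝ) - 1) * (∫ ω, X₀ ω ^ 3 ∂μ) ^ 2 * (∫ ω, X₀ ω ∂μ) ^ 2
        + (n : ℝ) * (∫ ω, X₀ ω ^ 4 ∂μ) ^ 2 :=
  stmt_10_general μ n X X₀ hindep hid hInt4
end Moments
end

section
/- Let X, (X_{it})_{i∈{1,2,3}, 1≤t≤n} be iid random variables with mean zero, variance one, and E[X⁴] < ∞. Set T_{12} = Σ_t X_{1t}X_{2t} and T_{13} = Σ_t X_{1t}X_{3t}. Then Cov(T_{12}², T_{13}²) = n(E[X⁴] − 1). -/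
/-!
Expanding the squares, `T₁₂² T₁₃² = ∑_{s,t,u,v} (X₁ₛ X₁ₜ X₁ᵤ X₁ᵥ) (X₂ₛ X₂ₜ) (X₃ᵤ X₃ᵥ)`. By
independence the expectation of such a monomial is the product, over the entries, of the moments
`E[X^k]` with `k` the multiplicity of the entry, so every term in which an entry occurs exactly
once vanishes. Only `s = t`, `u = v` survive, contributing `E[X⁴]` if `s = u` and `1` otherwise;
hence `E[T₁₂² T₁₃²] = n E[X⁴] + n (n - 1)`, while in the same way `E[T₁₂²] = E[T₁₃²] = n`.
-/

open MeasureTheory ProbabilityTheory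

lemma Multiset.prod_map_eq_prod_pow_count {κ M : Type*} [Fintype κ] [DecidableEq κ]
    [CommMonoid M] (m : Multiset κ) (f : κ → M) :
    (m.map f).prod = ∏ r, f r ^ m.count r := by
  rw [Finset.prod_multiset_map_count]
  exact Finset.prod_subset (Finset.subset_univ _) fun r _ hr => by
    rw [Multiset.count_eq_zero_of_notMem (by simpa using hr), pow_zero]

section IteProducts

variable {ι M α : Type*} [Fintype ι] [DecidableEq ι] [CommMonoid M] {F : ι → α → M} {z : α}

lemma Fintype.prod_apply_ite_ite (hF : ∀ i, F i z = 1) {a b : ι} (hab : a ≠ b) (x y : α) :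
    ∏ i, F i (if i = a then x else if i = b then y else z) = F a x * F b y := by
  rw [← Finset.prod_subset (Finset.subset_univ {a, b}) fun i _ hi => by simp_all]
  simp [Finset.prod_pair hab, Ne.symm hab]

lemma Fintype.prod_apply_ite_ite_ite (hF : ∀ i, F i z = 1) {a b c : ι} (hab : a ≠ b)
    (hac : a ≠ c) (hbc : b ≠ c) (x y w : α) :
    ∏ i, F i (if i = a then x else if i = b then y else if i = c then w else z)
      = F a x * F b y * F c w := by
  rw [← Finset.prod_subset (Finset.subset_univ {a, b, c}) fun i _ hi => by simp_all]
  simp [Finset.prod_insert, hab, hac, hbc, Ne.symm hab, Ne.symm hac, Ne.symm hbc, mul_assoc]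

end IteProducts

lemma sq_sum_eq_sum_prod {κ R : Type*} [Fintype κ] [CommSemiring R] (f : κ → R) :
    (∑ t, f t) ^ 2 = ∑ q : κ × κ, f q.1 * f q.2 := by
  rw [sq, Fintype.sum_mul_sum, Fintype.sum_prod_type]

lemma sum_sum_ite_eq_else_one {κ R : Type*} [Fintype κ] [DecidableEq κ] [CommRing R] (x : R) :
    ∑ s : κ, ∑ u : κ, (if s = u then x else 1) = Fintype.card κ * (x - 1) + Fintype.card κ ^ 2 := by
  have hsplit (s u : κ) : (if s = u then x else 1) = (x - 1) * (if s = u then 1 else 0) + 1 := by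
    split_ifs <;> ring
  simp only [hsplit, Finset.sum_add_distrib, mul_boole, Finset.sum_ite_eq, Finset.mem_univ,
    if_true, Finset.sum_const, Finset.card_univ, nsmul_eq_mul, mul_one]
  ring

lemma MeasureTheory.Integrable.pow_of_le {Ω : Type*} [MeasurableSpace Ω] {μ : Measure Ω}
    [IsFiniteMeasure μ] {f : Ω → ℝ} (hf : AEStronglyMeasurable f μ) {k p : ℕ} (hkp : k ≤ p)
    (hp : Integrable (fun ω => f ω ^ p) μ) : Integrable (fun ω => f ω ^ k) μ := by
  have := integrable_norm_pow_of_le hf hkp (by simpa only [norm_pow] using hp.norm)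
  exact (integrable_norm_iff (hf.pow k)).mp (by simpa only [Pi.pow_apply, norm_pow] using this)

lemma ProbabilityTheory.iIndepFun.integrable_fun_prod {Ω ι : Type*} [MeasurableSpace Ω]
    {μ : Measure Ω} [Fintype ι] {Y : ι → Ω → ℝ} (hY : iIndepFun Y μ)
    (hmeas : ∀ i, Measurable (Y i)) (hint : ∀ i, Integrable (Y i) μ) :
    Integrable (fun ω => ∏ i, Y i ω) μ := by
  refine ⟨Finset.aestronglyMeasurable_fun_prod _ fun i _ => (hmeas i).aestronglyMeasurable, ?_⟩
  have hY' : iIndepFun (fun i ω => ‖Y i ω‖ₑ) μ :=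
    hY.comp (fun _ x => ‖x‖ₑ) fun _ => measurable_enorm
  have henorm (ω : Ω) : ‖∏ i, Y i ω‖ₑ = ∏ i, ‖Y i ω‖ₑ := by
    simp [enorm_eq_nnnorm, nnnorm_prod]
  simp only [HasFiniteIntegral, henorm]
  rw [lintegral_prod_eq_prod_lintegral_of_indepFun _ _ hY' fun i => (hmeas i).enorm]
  exact ENNReal.prod_lt_top fun i _ => (hint i).hasFiniteIntegral

section IdenticallyDistributed

variable {Ω ι : Type*} [MeasurableSpace Ω] {μ : Measure Ω} [Fintype ι]
  {X : ι → Ω → ℝ} {X₀ : Ω → ℝ}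

lemma integral_prod_pow_eq_prod_moment (hindep : iIndepFun X μ)
    (hmeas : ∀ i, Measurable (X i)) (hid : ∀ i, IdentDistrib (X i) X₀ μ μ) (c : ι → ℕ) :
    ∫ ω, ∏ i, X i ω ^ c i ∂μ = ∏ i, moment X₀ (c i) μ := by
  have hpow : iIndepFun (fun i ω => X i ω ^ c i) μ :=
    hindep.comp (fun i x => x ^ c i) fun i => by fun_prop
  rw [hpow.integral_fun_prod_eq_prod_integral fun i => ((hmeas i).pow_const _).aestronglyMeasurable]
  exact Finset.prod_congr rfl fun i _ => ((hid i).comp (measurable_id.pow_const (c i))).integral_eq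

lemma integrable_prod_pow (hindep : iIndepFun X μ) (hmeas : ∀ i, Measurable (X i))
    (hid : ∀ i, IdentDistrib (X i) X₀ μ μ) {p : ℕ} (hp : Integrable (fun ω => X₀ ω ^ p) μ)
    (c : ι → ℕ) (hc : ∀ i, c i ≤ p) : Integrable (fun ω => ∏ i, X i ω ^ c i) μ := by
  have := hindep.isProbabilityMeasure
  refine (hindep.comp (fun i x => x ^ c i) fun i => by fun_prop).integrable_fun_prod
    (fun i => (hmeas i).pow_const _) fun i => ?_
  have hXp : Integrable (fun ω => X i ω ^ p) μ :=
    ((hid i).comp (measurable_id.pow_const p)).integrable_iff.mpr hp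
  exact hXp.pow_of_le (hmeas i).aestronglyMeasurable (hc i)

end IdenticallyDistributed

section MonomialMoment

variable {Ω κ : Type*} [MeasurableSpace Ω] {μ : Measure Ω} [Fintype κ] [DecidableEq κ]
  {X₀ : Ω → ℝ}

/-- The expectation of `∏_{r ∈ m} Y r` for independent `Y r` distributed as `X₀`. -/
noncomputable def monomialMoment (X₀ : Ω → ℝ) (μ : Measure Ω) (m : Multiset κ) : ℝ :=
  ∏ r, moment X₀ (m.count r) μ

lemma monomialMoment_zero [IsProbabilityMeasure μ] :
    monomialMoment X₀ μ (0 : Multiset κ) = 1 := by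
  simp [monomialMoment, moment]

lemma monomialMoment_pair [IsProbabilityMeasure μ] (hmean : ∫ ω, X₀ ω ∂μ = 0)
    (hvar : ∫ ω, X₀ ω ^ 2 ∂μ = 1) (s t : κ) :
    monomialMoment X₀ μ {s, t} = if s = t then 1 else 0 := by
  split_ifs with hst
  · subst hst
    refine Finset.prod_eq_one fun r _ => ?_
    by_cases hr : r = s <;> simp [hr, moment, hvar]
  · exact Finset.prod_eq_zero (Finset.mem_univ s) (by simp [hst, moment, hmean])

lemma monomialMoment_double_pair [IsProbabilityMeasure μ] (hvar : ∫ ω, X₀ ω ^ 2 ∂μ = 1)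
    (s u : κ) : monomialMoment X₀ μ {s, s, u, u} = if s = u then moment X₀ 4 μ else 1 := by
  split_ifs with hsu
  · subst hsu
    rw [monomialMoment, Finset.prod_eq_single s (fun r _ hr => by simp [hr, moment]) (by simp)]
    simp
  · refine Finset.prod_eq_one fun r _ => ?_
    by_cases hr : r = s
    · subst hr; simp [hsu, moment, hvar]
    · by_cases hr' : r = u
      · subst hr'; simp [Ne.symm hsu, moment, hvar]
      · simp [hr, hr', moment]

end MonomialMoment

section RowMonomial

variable {Ω ι κ : Type*} [Fintype ι] [Fintype κ] [DecidableEq κ] {X : ι × κ → Ω → ℝ}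

def rowMonomial (X : ι × κ → Ω → ℝ) (m : ι → Multiset κ) (ω : Ω) : ℝ :=
  ∏ i, ((m i).map fun r => X (i, r) ω).prod

lemma rowMonomial_eq_prod_pow_count (m : ι → Multiset κ) (ω : Ω) :
    rowMonomial X m ω = ∏ j : ι × κ, X j ω ^ (m j.1).count j.2 := by
  simp only [rowMonomial, Multiset.prod_map_eq_prod_pow_count, Fintype.prod_prod_type]

variable [MeasurableSpace Ω] {μ : Measure Ω} {X₀ : Ω → ℝ}

lemma integral_sum_rowMonomial (hindep : iIndepFun X μ) (hmeas : ∀ j, Measurable (X j))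
    (hid : ∀ j, IdentDistrib (X j) X₀ μ μ) {p : ℕ} (hp : Integrable (fun ω => X₀ ω ^ p) μ)
    {α : Type*} (S : Finset α) (m : α → ι → Multiset κ)
    (hm : ∀ a i, Multiset.card (m a i) ≤ p) :
    ∫ ω, ∑ a ∈ S, rowMonomial X (m a) ω ∂μ = ∑ a ∈ S, ∏ i, monomialMoment X₀ μ (m a i) := by
  simp only [rowMonomial_eq_prod_pow_count]
  rw [integral_finsetSum _ fun a _ => integrable_prod_pow hindep hmeas hid hp _
    fun j => (Multiset.count_le_card _ _).trans (hm a j.1)]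
  refine Finset.sum_congr rfl fun a _ => ?_
  rw [integral_prod_pow_eq_prod_moment hindep hmeas hid, Fintype.prod_prod_type]
  rfl

end RowMonomial

section Rows

variable {Ω ι κ : Type*} [MeasurableSpace Ω] {μ : Measure Ω} [IsProbabilityMeasure μ]
  [Fintype ι] [DecidableEq ι] [Fintype κ] [DecidableEq κ] {X : ι × κ → Ω → ℝ} {X₀ : Ω → ℝ}

lemma integral_sq_sum_mul_eq_card (hindep : iIndepFun X μ) (hmeas : ∀ j, Measurable (X j))
    (hid : ∀ j, IdentDistrib (X j) X₀ μ μ) (hmean : ∫ ω, X₀ ω ∂μ = 0)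
    (hvar : ∫ ω, X₀ ω ^ 2 ∂μ = 1) {a b : ι} (hab : a ≠ b) :
    ∫ ω, (∑ t, X (a, t) ω * X (b, t) ω) ^ 2 ∂μ = Fintype.card κ := by
  let m (q : κ × κ) (i : ι) : Multiset κ :=
    if i = a then {q.1, q.2} else if i = b then {q.1, q.2} else 0
  have hexpand (ω : Ω) : (∑ t, X (a, t) ω * X (b, t) ω) ^ 2 = ∑ q, rowMonomial X (m q) ω := by
    rw [sq_sum_eq_sum_prod]
    refine Fintype.sum_congr _ _ fun q => ?_
    rw [rowMonomial, Fintype.prod_apply_ite_ite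
      (F := fun i (A : Multiset κ) => (A.map fun r => X (i, r) ω).prod) (by simp) hab]
    simp only [Multiset.insert_eq_cons, Multiset.map_cons, Multiset.map_singleton,
      Multiset.prod_cons, Multiset.prod_singleton]
    ring
  have hp : Integrable (fun ω => X₀ ω ^ 2) μ := .of_integral_ne_zero (by simp [hvar])
  simp only [hexpand]
  rw [integral_sum_rowMonomial hindep hmeas hid hp Finset.univ m fun q i => by
    simp only [m]; split_ifs <;> simp]
  simp only [m, Fintype.prod_apply_ite_ite (F := fun _ => monomialMoment X₀ μ)
    (fun _ => monomialMoment_zero) hab, monomialMoment_pair hmean hvar]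
  simp [Fintype.sum_prod_type]

lemma integral_sq_sum_mul_mul_sq_sum_mul (hindep : iIndepFun X μ) (hmeas : ∀ j, Measurable (X j))
    (hid : ∀ j, IdentDistrib (X j) X₀ μ μ) (hmean : ∫ ω, X₀ ω ∂μ = 0)
    (hvar : ∫ ω, X₀ ω ^ 2 ∂μ = 1) (h4 : Integrable (fun ω => X₀ ω ^ 4) μ) {a b c : ι}
    (hab : a ≠ b) (hac : a ≠ c) (hbc : b ≠ c) :
    ∫ ω, (∑ t, X (a, t) ω * X (b, t) ω) ^ 2 * (∑ t, X (a, t) ω * X (c, t) ω) ^ 2 ∂μ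
      = Fintype.card κ * (moment X₀ 4 μ - 1) + Fintype.card κ ^ 2 := by
  let m (q : (κ × κ) × (κ × κ)) (i : ι) : Multiset κ :=
    if i = a then {q.1.1, q.1.2, q.2.1, q.2.2} else if i = b then {q.1.1, q.1.2}
    else if i = c then {q.2.1, q.2.2} else 0
  have hexpand (ω : Ω) : (∑ t, X (a, t) ω * X (b, t) ω) ^ 2 * (∑ t, X (a, t) ω * X (c, t) ω) ^ 2
      = ∑ q, rowMonomial X (m q) ω := by
    rw [sq_sum_eq_sum_prod, sq_sum_eq_sum_prod, Fintype.sum_mul_sum, ← Fintype.sum_prod_type']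
    refine Fintype.sum_congr _ _ fun q => ?_
    rw [rowMonomial, Fintype.prod_apply_ite_ite_ite
      (F := fun i (A : Multiset κ) => (A.map fun r => X (i, r) ω).prod) (by simp) hab hac hbc]
    simp only [Multiset.insert_eq_cons, Multiset.map_cons, Multiset.map_singleton,
      Multiset.prod_cons, Multiset.prod_singleton]
    ring
  simp only [hexpand]
  rw [integral_sum_rowMonomial hindep hmeas hid h4 Finset.univ m fun q i => by
    simp only [m]; split_ifs <;> simp]
  simp only [m, Fintype.prod_apply_ite_ite_ite (F := fun _ => monomialMoment X₀ μ)
    (fun _ => monomialMoment_zero) hab hac hbc, monomialMoment_pair hmean hvar]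
  simp only [Fintype.sum_prod_type, mul_boole, Finset.sum_ite_irrel, Finset.sum_const_zero,
    Finset.sum_ite_eq, Finset.mem_univ, if_true, monomialMoment_double_pair hvar]
  exact sum_sum_ite_eq_else_one _

end Rows

theorem stmt_12_general {Ω : Type*} [MeasurableSpace Ω] (μ : Measure Ω) [IsProbabilityMeasure μ]
    (n : ℕ) (X : Fin 3 × Fin n → Ω → ℝ) (X₀ : Ω → ℝ)
    (hmeas : ∀ i, Measurable (X i))
    (hindep : iIndepFun X μ)
    (hid : ∀ i, IdentDistrib (X i) X₀ μ μ)
    (hmean : ∫ ω, X₀ ω ∂μ = 0) (hvar : ∫ ω, X₀ ω ^ 2 ∂μ = 1)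
    (hInt4 : Integrable (fun ω => X₀ ω ^ 4) μ) :
    (∫ ω, (∑ t : Fin n, X (0, t) ω * X (1, t) ω) ^ 2
            * (∑ t : Fin n, X (0, t) ω * X (2, t) ω) ^ 2 ∂μ)
      - (∫ ω, (∑ t : Fin n, X (0, t) ω * X (1, t) ω) ^ 2 ∂μ)
          * (∫ ω, (∑ t : Fin n, X (0, t) ω * X (2, t) ω) ^ 2 ∂μ)
      = (n : ℝ) * ((∫ ω, X₀ ω ^ 4 ∂μ) - 1) := by
  rw [integral_sq_sum_mul_mul_sq_sum_mul hindep hmeas hid hmean hvar hInt4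
      (a := 0) (b := 1) (c := 2) (by decide) (by decide) (by decide),
    integral_sq_sum_mul_eq_card hindep hmeas hid hmean hvar (a := 0) (b := 1) (by decide),
    integral_sq_sum_mul_eq_card hindep hmeas hid hmean hvar (a := 0) (b := 2) (by decide),
    Fintype.card_fin, moment_def]
  simp only [Pi.pow_apply]
  ring

theorem stmt_12 {Ω : Type*} [MeasurableSpace Ω] (μ : Measure Ω) [IsProbabilityMeasure μ]
    (n : ℕ) (X : Fin 3 × Fin n → Ω → ℝ) (X₀ : Ω → ℝ)
    (hmeas : ∀ i, Measurable (X i)) (hmeas₀ : Measurable X₀)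
    (hindep : iIndepFun X μ)
    (hid : ∀ i, IdentDistrib (X i) X₀ μ μ)
    (hmean : ∫ ω, X₀ ω ∂μ = 0) (hvar : ∫ ω, X₀ ω ^ 2 ∂μ = 1)
    (hInt4 : Integrable (fun ω => X₀ ω ^ 4) μ) :
    (∫ ω, (∑ t : Fin n, X (0, t) ω * X (1, t) ω) ^ 2
            * (∑ t : Fin n, X (0, t) ω * X (2, t) ω) ^ 2 ∂μ)
      - (∫ ω, (∑ t : Fin n, X (0, t) ω * X (1, t) ω) ^ 2 ∂μ)
          * (∫ ω, (∑ t : Fin n, X (0, t) ω * X (2, t) ω) ^ 2 ∂μ)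
      = (n : ℝ) * ((∫ ω, X₀ ω ^ 4 ∂μ) - 1) :=
  stmt_12_general μ n X X₀ hmeas hindep hid hmean hvar hInt4
end

section
/- Let X, (X_{it})_{1≤i≤p, 1≤t≤n} be iid real random variables with E[X] = 0, E[X²] = 1, E[X⁴] < ∞, and let S = (S_{ij}) = n^{−1} Σ_{t=1}^n x_t x_tᵀ be the sample covariance matrix of the columns x_t = (X_{1t},…,X_{pt})ᵀ. Then E[tr(S²)] = (p/n)(n + E[X⁴] − 2) + p²/n. -/
/-!
Expanding the square, `tr(S²) = n⁻² ∑_{i,j,t,s} X_{it} X_{jt} X_{is} X_{js}`. Independence and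
centering give `E[X_{it} X_{jt} X_{is} X_{js}] = δ_{ij} + δ_{ts} + (E[X⁴] - 2) δ_{ij} δ_{ts}`, and
summing over the indices yields `p n² + p² n + (E[X⁴] - 2) p n`.
-/

open MeasureTheory ProbabilityTheory Finset
open scoped ENNReal

instance ENNReal.holderTriple_four_four_two : ENNReal.HolderTriple 4 4 2 :=
  ⟨by rw [show (4 : ℝ≥0∞) = 2 * 2 by norm_num, ENNReal.mul_inv (by simp) (by simp), ← mul_add,
    ENNReal.inv_two_add_inv_two, mul_one]⟩

section Lp

variable {α : Type*} [MeasurableSpace α] {μ : Measure α}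

lemma memLp_four_of_integrable_pow_four {f : α → ℝ} (hf : AEStronglyMeasurable f μ)
    (h : Integrable (fun x => f x ^ 4) μ) : MemLp f 4 μ := by
  rw [← integrable_norm_rpow_iff hf (by norm_num) (by norm_num)]
  simpa [Real.norm_eq_abs, pow_abs, ← Even.pow_abs ⟨2, rfl⟩] using h

lemma integrable_mul_mul_mul_of_memLp_four {f g h k : α → ℝ} (hf : MemLp f 4 μ)
    (hg : MemLp g 4 μ) (hh : MemLp h 4 μ) (hk : MemLp k 4 μ) :
    Integrable (fun x => f x * g x * (h x * k x)) μ :=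
  (hg.mul' hf (r := 2)).integrable_mul (hk.mul' hh (r := 2))

end Lp

section Moments

variable {Ω ι : Type*} [MeasurableSpace Ω] {μ : Measure Ω} {Y : ι → Ω → ℝ}

lemma integral_mul_eq_ite [DecidableEq ι] (hindep : iIndepFun Y μ)
    (hmeas : ∀ a, AEMeasurable (Y a) μ) (hmean : ∀ a, ∫ ω, Y a ω ∂μ = 0)
    (hvar : ∀ a, ∫ ω, Y a ω ^ 2 ∂μ = 1) (a b : ι) :
    ∫ ω, Y a ω * Y b ω ∂μ = if a = b then 1 else 0 := by
  split_ifs with hab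
  · simpa [hab, sq] using hvar b
  · rw [(hindep.indepFun hab).integral_fun_mul_eq_mul_integral (hmeas a).aestronglyMeasurable
      (hmeas b).aestronglyMeasurable, hmean a, zero_mul]

lemma integral_sq_mul_sq_of_ne (hindep : iIndepFun Y μ)
    (hmeas : ∀ a, AEMeasurable (Y a) μ) (hvar : ∀ a, ∫ ω, Y a ω ^ 2 ∂μ = 1) {a b : ι}
    (hab : a ≠ b) : ∫ ω, Y a ω ^ 2 * Y b ω ^ 2 ∂μ = 1 := by
  have hsq : (fun ω => Y a ω ^ 2) ⟂ᵢ[μ] fun ω => Y b ω ^ 2 :=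
    (hindep.indepFun hab).comp (measurable_id.pow_const 2) (measurable_id.pow_const 2)
  rw [hsq.integral_fun_mul_eq_mul_integral ((hmeas a).pow_const 2).aestronglyMeasurable
    ((hmeas b).pow_const 2).aestronglyMeasurable, hvar, hvar, mul_one]

lemma integral_mul_mul_mul_eq_delta {κ τ : Type*} [DecidableEq κ] [DecidableEq τ]
    {X : κ × τ → Ω → ℝ} {m₄ : ℝ} (hindep : iIndepFun X μ) (hmeas : ∀ a, AEMeasurable (X a) μ)
    (hmean : ∀ a, ∫ ω, X a ω ∂μ = 0) (hvar : ∀ a, ∫ ω, X a ω ^ 2 ∂μ = 1)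
    (hfourth : ∀ a, ∫ ω, X a ω ^ 4 ∂μ = m₄) (i j : κ) (t s : τ) :
    ∫ ω, X (i, t) ω * X (j, t) ω * (X (i, s) ω * X (j, s) ω) ∂μ =
      (if i = j then 1 else 0) + (if t = s then 1 else 0) +
        (m₄ - 2) * (if i = j then 1 else 0) * (if t = s then 1 else 0) := by
  by_cases hts : t = s
  · subst hts
    by_cases hij : i = j
    · subst hij
      calc _ = ∫ ω, X (i, t) ω ^ 4 ∂μ := by congr 1 with ω; ring
        _ = _ := by simp only [hfourth, ↓reduceIte, mul_one]; ring
    · have hne : (i, t) ≠ (j, t) := by simp [hij]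
      calc _ = ∫ ω, X (i, t) ω ^ 2 * X (j, t) ω ^ 2 ∂μ := by congr 1 with ω; ring
        _ = _ := by simp [integral_sq_mul_sq_of_ne hindep hmeas hvar hne, hij]
  · have hne : ∀ k l : κ, (k, t) ≠ (l, s) := by simp [hts]
    have hprod := (hindep.indepFun_mul_mul₀ hmeas _ _ _ _ (hne i i) (hne i j) (hne j i)
      (hne j j)).integral_mul_eq_mul_integral ((hmeas _).mul (hmeas _)).aestronglyMeasurable
      ((hmeas _).mul (hmeas _)).aestronglyMeasurable
    simp only [Pi.mul_apply] at hprod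
    rw [hprod, integral_mul_eq_ite hindep hmeas hmean hvar,
      integral_mul_eq_ite hindep hmeas hmean hvar]
    by_cases hij : i = j <;> simp [hij, hts]

end Moments

lemma sum_sum_sum_sum_delta {κ τ : Type*} [Fintype κ] [DecidableEq κ] [Fintype τ]
    [DecidableEq τ] (c : ℝ) :
    ∑ i : κ, ∑ j : κ, ∑ t : τ, ∑ s : τ, ((if i = j then 1 else 0) + (if t = s then 1 else 0) +
        c * (if i = j then 1 else 0) * (if t = s then 1 else 0) : ℝ) =
      Fintype.card κ * Fintype.card τ ^ 2 + Fintype.card κ ^ 2 * Fintype.card τ +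
        c * Fintype.card κ * Fintype.card τ := by
  simp only [mul_ite, mul_one, mul_zero, sum_add_distrib, sum_ite_irrel, sum_const, card_univ,
    nsmul_eq_mul, sum_ite_eq, mem_univ, ↓reduceIte]
  ring

theorem stmt_19_general {Ω : Type*} [MeasurableSpace Ω] (μ : Measure Ω) [IsProbabilityMeasure μ]
    (p n : ℕ)
    (X : Fin p × Fin n → Ω → ℝ) (X₀ : Ω → ℝ)
    (hindep : iIndepFun X μ)
    (hid : ∀ i, IdentDistrib (X i) X₀ μ μ)
    (hmean : ∫ ω, X₀ ω ∂μ = 0) (hvar : ∫ ω, X₀ ω ^ 2 ∂μ = 1)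
    (hInt4 : Integrable (fun ω => X₀ ω ^ 4) μ)
    (S : Fin p → Fin p → Ω → ℝ)
    (hS : ∀ i j ω, S i j ω = (1 / (n : ℝ)) * ∑ t : Fin n, X (i, t) ω * X (j, t) ω) :
    ∫ ω, ∑ i : Fin p, ∑ j : Fin p, S i j ω ^ 2 ∂μ =
      ((p : ℝ) / n) * ((n : ℝ) + (∫ ω, X₀ ω ^ 4 ∂μ) - 2) + (p : ℝ) ^ 2 / n := by
  have hmeas a : AEMeasurable (X a) μ := (hid a).aemeasurable_fst
  have hL4 a : MemLp (X a) 4 μ := (hid a).symm.memLp_snd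
    (memLp_four_of_integrable_pow_four (hid a).aemeasurable_snd.aestronglyMeasurable hInt4)
  have hentry := integral_mul_mul_mul_eq_delta (m₄ := ∫ ω, X₀ ω ^ 4 ∂μ) hindep
    hmeas
    (fun a => (hid a).integral_eq.trans hmean)
    (fun a => ((hid a).comp (measurable_id.pow_const 2)).integral_eq.trans hvar)
    (fun a => ((hid a).comp (measurable_id.pow_const 4)).integral_eq)
  have hint i j t s :
      Integrable (fun ω => X (i, t) ω * X (j, t) ω * (X (i, s) ω * X (j, s) ω)) μ :=
    integrable_mul_mul_mul_of_memLp_four (hL4 _) (hL4 _) (hL4 _) (hL4 _)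
  simp_rw [hS, mul_pow, ← mul_sum, sq, sum_mul_sum]
  rw [integral_const_mul]
  simp (maxDischargeDepth := 4) only [integral_finsetSum, integrable_finsetSum, hint, mem_univ,
    implies_true]
  simp only [hentry, sum_sum_sum_sum_delta, Fintype.card_fin]
  rcases eq_or_ne (n : ℝ) 0 with hn | hn
  · simp [hn]
  · field_simp
    ring

theorem stmt_19 {Ω : Type*} [MeasurableSpace Ω] (μ : Measure Ω) [IsProbabilityMeasure μ]
    (p n : ℕ) (hp : 0 < p) (hn : 0 < n)
    (X : Fin p × Fin n → Ω → ℝ) (X₀ : Ω → ℝ)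
    (hmeas : ∀ i, Measurable (X i)) (hmeas₀ : Measurable X₀)
    (hindep : iIndepFun X μ)
    (hid : ∀ i, IdentDistrib (X i) X₀ μ μ)
    (hmean : ∫ ω, X₀ ω ∂μ = 0) (hvar : ∫ ω, X₀ ω ^ 2 ∂μ = 1)
    (hInt4 : Integrable (fun ω => X₀ ω ^ 4) μ)
    (S : Fin p → Fin p → Ω → ℝ)
    (hS : ∀ i j ω, S i j ω = (1 / (n : ℝ)) * ∑ t : Fin n, X (i, t) ω * X (j, t) ω) :
    ∫ ω, ∑ i : Fin p, ∑ j : Fin p, S i j ω ^ 2 ∂μ =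
      ((p : ℝ) / n) * ((n : ℝ) + (∫ ω, X₀ ω ^ 4 ∂μ) - 2) + (p : ℝ) ^ 2 / n :=
  stmt_19_general μ p n X X₀ hindep hid hmean hvar hInt4 S hS
end
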